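/- Let k ≥ 1 and let x_1, …, x_k be real numbers satisfying: x_1 > 0; x_i ≥ 0 for all i ∈ {1, …, k}; and x_i ≤ 2·max_{j ∈ {1, …, i−1}} x_j for all i ∈ {2, …, k}. Then k − (∑_{i=1}^{k} i·2^{-i}·x_i)/(∑_{i=1}^{k} 2^{-i}·x_i) ≥ k/4 − 1/2. -/

import Mathlib

/-- For `k ≥ 1` and reals `x_1, …, x_k` with `x_1 > 0`, `x_i ≥ 0` for all
`i ∈ {1, …, k}`, and `x_i ≤ 2·max_{j ∈ {1, …, i−1}} x_j` for `i ∈ {2, …, k}`: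
`k − (∑ i·2^{-i}·x_i)/(∑ 2^{-i}·x_i) ≥ k/4 − 1/2`. -/
theorem stmt_13 (k : ℕ) (hk : 1 ≤ k) (x : ℕ → ℝ)
    (hx1 : 0 < x 1) (hx0 : ∀ i ∈ Finset.Icc 1 k, 0 ≤ x i)
    (hx2 : ∀ i, ∀ h2 : 2 ≤ i, i ≤ k →
      x i ≤ 2 * (Finset.Icc 1 (i - 1)).sup' (Finset.nonempty_Icc.mpr (by omega)) x) :
    (k : ℝ) -
        (∑ i ∈ Finset.Icc 1 k, (i : ℝ) * (2 : ℝ) ^ (-(i : ℤ)) * x i) /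
          (∑ i ∈ Finset.Icc 1 k, (2 : ℝ) ^ (-(i : ℤ)) * x i) ≥
      (k : ℝ) / 4 - 1 / 2 := by
  have h2R : (0:ℝ) < 2 := by norm_num
  set w : ℕ → ℝ := fun i => (2:ℝ) ^ (-(i:ℤ)) * x i with hwdef
  have hw0 : ∀ i, 1 ≤ i → i ≤ k → 0 ≤ w i := by
    intro i hi1 hi2
    exact mul_nonneg (zpow_pos h2R _).le (hx0 i (Finset.mem_Icc.mpr ⟨hi1, hi2⟩))
  -- Key lemma: i * w i ≤ ∑_{j=1}^{i} w j
  have key : ∀ i, 1 ≤ i → i ≤ k → (i:ℝ) * w i ≤ ∑ j ∈ Finset.Icc 1 i, w j := by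
    intro i
    induction i using Nat.strong_induction_on with
    | _ i IH =>
      intro hi1 hik
      rcases Nat.lt_or_ge i 2 with hcase | hcase
      · have hi : i = 1 := by omega
        subst hi
        simp
      · have hne : (Finset.Icc 1 (i-1)).Nonempty := Finset.nonempty_Icc.mpr (by omega)
        obtain ⟨m, hm, hsup⟩ := Finset.exists_mem_eq_sup' hne x
        obtain ⟨hm1, hm2⟩ := Finset.mem_Icc.mp hm
        have hmk : m ≤ k := by omega
        have hxi : x i ≤ 2 * (Finset.Icc 1 (i-1)).sup' hne x := hx2 i hcase hik
        rw [hsup] at hxi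
        have hxm0 : 0 ≤ x m := hx0 m (Finset.mem_Icc.mpr ⟨hm1, hmk⟩)
        have hIH : (m:ℝ) * w m ≤ ∑ j ∈ Finset.Icc 1 m, w j := IH m (by omega) hm1 hmk
        set d : ℕ := i - 1 - m with hd
        have hnat : i - 1 ≤ m * 2^d := by
          have h2d : d + 1 ≤ 2^d := Nat.lt_two_pow_self
          calc i - 1 = m + d := by omega
            _ ≤ m * (d + 1) := by nlinarith
            _ ≤ m * 2^d := Nat.mul_le_mul_left m h2d
        have hd2 : (i:ℝ) - 1 ≤ (m:ℝ) * 2^d := by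
          have h := (Nat.cast_le (α := ℝ)).mpr hnat
          rw [Nat.cast_sub hi1] at h
          push_cast at h
          exact h
        -- power identity: 2^(-m) = 2^(-i) * 2 * 2^d
        have hpow : (2:ℝ) ^ (-(m:ℤ)) = (2:ℝ) ^ (-(i:ℤ)) * 2 * 2^d := by
          have hexp : (-(m:ℤ)) = (-(i:ℤ)) + 1 + (d:ℤ) := by
            have : (d:ℤ) = (i:ℤ) - 1 - m := by omega
            omega
          rw [hexp, zpow_add₀ (two_ne_zero), zpow_add₀ (two_ne_zero), zpow_one,
            zpow_natCast]
        -- main step: (i-1) * w i ≤ m * w m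
        have hstep : ((i:ℝ) - 1) * w i ≤ (m:ℝ) * w m := by
          have hp : (0:ℝ) < (2:ℝ) ^ (-(i:ℤ)) := zpow_pos h2R _
          have hi1R : (0:ℝ) ≤ (i:ℝ) - 1 := by
            have : (1:ℝ) ≤ (i:ℝ) := by exact_mod_cast hi1
            linarith
          have e1 : w i = (2:ℝ) ^ (-(i:ℤ)) * x i := rfl
          have e2 : (m:ℝ) * w m = (m:ℝ) * 2^d * (2 * ((2:ℝ) ^ (-(i:ℤ)) * x m)) := by
            show (m:ℝ) * ((2:ℝ) ^ (-(m:ℤ)) * x m) = _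
            rw [hpow]; ring
          rw [e1, e2]
          calc ((i:ℝ) - 1) * ((2:ℝ) ^ (-(i:ℤ)) * x i)
              ≤ ((i:ℝ) - 1) * ((2:ℝ) ^ (-(i:ℤ)) * (2 * x m)) := by
                apply mul_le_mul_of_nonneg_left _ hi1R
                exact mul_le_mul_of_nonneg_left hxi hp.le
            _ = ((i:ℝ) - 1) * (2 * ((2:ℝ) ^ (-(i:ℤ)) * x m)) := by ring
            _ ≤ ((m:ℝ) * 2^d) * (2 * ((2:ℝ) ^ (-(i:ℤ)) * x m)) := by
                apply mul_le_mul_of_nonneg_right hd2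
                positivity
        -- sum comparison
        have hnotmem : i ∉ Finset.Icc 1 m := by
          simp only [Finset.mem_Icc]; omega
        have hsubset : insert i (Finset.Icc 1 m) ⊆ Finset.Icc 1 i := by
          intro j hj
          simp only [Finset.mem_insert, Finset.mem_Icc] at hj ⊢
          omega
        have hsum : w i + ∑ j ∈ Finset.Icc 1 m, w j ≤ ∑ j ∈ Finset.Icc 1 i, w j := by
          rw [← Finset.sum_insert hnotmem]
          apply Finset.sum_le_sum_of_subset_of_nonneg hsubset
          intro j hj _
          obtain ⟨hj1, hj2⟩ := Finset.mem_Icc.mp hj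
          exact hw0 j hj1 (by omega)
        have hwi0 : 0 ≤ w i := hw0 i hi1 hik
        calc (i:ℝ) * w i = ((i:ℝ) - 1) * w i + w i := by ring
          _ ≤ (m:ℝ) * w m + w i := by linarith
          _ ≤ (∑ j ∈ Finset.Icc 1 m, w j) + w i := by linarith
          _ ≤ ∑ j ∈ Finset.Icc 1 i, w j := by linarith
  -- Main part
  set W : ℝ := ∑ j ∈ Finset.Icc 1 k, w j with hWdef
  have hWpos : 0 < W := by
    apply Finset.sum_pos'
    · intro j hj
      obtain ⟨hj1, hj2⟩ := Finset.mem_Icc.mp hj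
      exact hw0 j hj1 hj2
    · exact ⟨1, Finset.mem_Icc.mpr ⟨le_refl 1, hk⟩, mul_pos (zpow_pos h2R _) hx1⟩
  have hiW : ∀ i, 1 ≤ i → i ≤ k → (i:ℝ) * w i ≤ W := by
    intro i hi1 hi2
    refine (key i hi1 hi2).trans ?_
    apply Finset.sum_le_sum_of_subset_of_nonneg (Finset.Icc_subset_Icc_right hi2)
    intro j hj _
    obtain ⟨hj1, hj2⟩ := Finset.mem_Icc.mp hj
    exact hw0 j hj1 hj2
  set t : ℕ := (k+1)/2 with htdef
  have ht1 : 1 ≤ t := by omega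
  have htk : t ≤ k := by omega
  have h2t : 2*t = k ∨ 2*t = k+1 := by omega
  have hK0 : (0:ℝ) < (k:ℝ) := by exact_mod_cast hk
  have hT1 : (1:ℝ) ≤ (t:ℝ) := by exact_mod_cast ht1
  have hTK : (t:ℝ) ≤ (k:ℝ) := by exact_mod_cast htk
  -- the shifted sum
  have hIoc : Finset.Icc 1 k = Finset.Ioc 0 k := Finset.Icc_add_one_left_eq_Ioc ..
  have hsplit : (∑ i ∈ Finset.Ioc 0 t, ((i:ℝ) - t) * w i)
      + ∑ i ∈ Finset.Ioc t k, ((i:ℝ) - t) * w i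
      = ∑ i ∈ Finset.Icc 1 k, ((i:ℝ) - t) * w i := by
    rw [hIoc]
    exact Finset.sum_Ioc_consecutive _ (Nat.zero_le t) htk
  have hA : (∑ i ∈ Finset.Ioc 0 t, ((i:ℝ) - t) * w i) ≤ 0 := by
    apply Finset.sum_nonpos
    intro i hi
    obtain ⟨hi1, hi2⟩ := Finset.mem_Ioc.mp hi
    have : (i:ℝ) ≤ (t:ℝ) := by exact_mod_cast hi2
    exact mul_nonpos_of_nonpos_of_nonneg (by linarith) (hw0 i hi1 (by omega))
  have hB : (∑ i ∈ Finset.Ioc t k, ((i:ℝ) - t) * w i)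
      ≤ ((k:ℝ) - t) * (((k:ℝ) - t) / k * W) := by
    have hcard : ((Finset.Ioc t k).card : ℝ) = (k:ℝ) - t := by
      rw [Nat.card_Ioc, Nat.cast_sub htk]
    calc (∑ i ∈ Finset.Ioc t k, ((i:ℝ) - t) * w i)
        ≤ ∑ i ∈ Finset.Ioc t k, ((k:ℝ) - t) / k * W := by
          apply Finset.sum_le_sum
          intro i hi
          obtain ⟨hi1, hi2⟩ := Finset.mem_Ioc.mp hi
          have hiw := hiW i (by omega) hi2
          have hwi0 := hw0 i (by omega) hi2
          have hIR : (t:ℝ) < (i:ℝ) := by exact_mod_cast hi1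
          have hIK : (i:ℝ) ≤ (k:ℝ) := by exact_mod_cast hi2
          rw [div_mul_eq_mul_div, le_div_iff₀ hK0]
          nlinarith [mul_le_mul_of_nonneg_left hiw (by linarith : (0:ℝ) ≤ (k:ℝ) - t),
            mul_nonneg hwi0 (mul_nonneg (by linarith : (0:ℝ) ≤ (t:ℝ))
              (by linarith : (0:ℝ) ≤ (k:ℝ) - i))]
      _ = ((k:ℝ) - t) * (((k:ℝ) - t) / k * W) := by
          rw [Finset.sum_const, nsmul_eq_mul, hcard]
  have hnum : (∑ i ∈ Finset.Icc 1 k, ((i:ℝ) - t) * w i)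
      = (∑ i ∈ Finset.Icc 1 k, (i:ℝ) * w i) - (t:ℝ) * W := by
    rw [hWdef, Finset.mul_sum, ← Finset.sum_sub_distrib]
    apply Finset.sum_congr rfl
    intro i _
    ring
  have hS : (∑ i ∈ Finset.Icc 1 k, (i:ℝ) * w i)
      ≤ (t:ℝ) * W + ((k:ℝ) - t) * (((k:ℝ) - t)/k * W) := by
    have h := hsplit
    rw [hnum] at h
    linarith
  have harith : (t:ℝ) * W + ((k:ℝ)-t) * (((k:ℝ)-t)/k * W) ≤ (3*(k:ℝ)/4 + 1/2) * W := by
    have hKne : (k:ℝ) ≠ 0 := ne_of_gt hK0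
    have hcoef : (t:ℝ)*(k:ℝ) + ((k:ℝ)-t)^2 ≤ (3*(k:ℝ)/4 + 1/2)*(k:ℝ) := by
      rcases h2t with h | h
      · have hT : 2*(t:ℝ) = (k:ℝ) := by exact_mod_cast h
        nlinarith
      · have hT : 2*(t:ℝ) = (k:ℝ)+1 := by exact_mod_cast h
        nlinarith
    have hWK : (0:ℝ) ≤ W / k := le_of_lt (div_pos hWpos hK0)
    have hmul := mul_le_mul_of_nonneg_right hcoef hWK
    calc (t:ℝ)*W + ((k:ℝ)-t) * (((k:ℝ)-t)/k * W)
        = ((t:ℝ)*(k:ℝ) + ((k:ℝ)-t)^2) * (W/k) := by field_simp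
      _ ≤ ((3*(k:ℝ)/4 + 1/2)*(k:ℝ)) * (W/k) := hmul
      _ = (3*(k:ℝ)/4 + 1/2) * W := by field_simp
  have hnum2 : (∑ i ∈ Finset.Icc 1 k, (i:ℝ) * (2:ℝ)^(-(i:ℤ)) * x i)
      = ∑ i ∈ Finset.Icc 1 k, (i:ℝ) * w i := by
    apply Finset.sum_congr rfl
    intro i _
    rw [mul_assoc]
  rw [ge_iff_le, hnum2]
  have hdiv : (∑ i ∈ Finset.Icc 1 k, (i:ℝ) * w i) / W ≤ 3*(k:ℝ)/4 + 1/2 :=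
    (div_le_iff₀ hWpos).mpr (by linarith)
  linarith
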